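/- Let E, F be complex Banach spaces, U ⊆ E open, and f : U → F. Then f is (Fréchet) holomorphic on U if and only if f is Gâteaux holomorphic (holomorphic on complex lines) and locally bounded on U. -/

import Mathlib

open Metric Set Filter

lemma dslope_bound_aux {F : Type*} [NormedAddCommGroup F] [NormedSpace ℂ F]
    {φ : ℂ → F} {R B : ℝ} (hR : 0 < R)
    (hd : DifferentiableOn ℂ φ (ball 0 R))
    (hB : ∀ z ∈ ball (0:ℂ) R, ‖φ z - φ 0‖ ≤ B)
    {z : ℂ} (hz : z ∈ ball (0:ℂ) R) :
    ‖dslope φ 0 z‖ ≤ B / R := by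
  have key : ∀ ε : ℝ, 0 < ε → ‖dslope φ 0 z‖ ≤ (B + ε) / R := by
    intro ε hε
    refine Complex.norm_dslope_le_div_of_mapsTo_ball hd (fun w hw => ?_) hz
    rw [mem_closedBall, dist_eq_norm]
    exact le_trans (hB w hw) (le_add_of_nonneg_right hε.le)
  refine le_of_forall_pos_le_add fun δ hδ => ?_
  calc ‖dslope φ 0 z‖ ≤ (B + δ * R) / R := key _ (by positivity)
    _ = B / R + δ := by field_simp

set_option maxHeartbeats 1000000 in
/-- Gâteaux holomorphic + bounded on a ball implies Fréchet differentiable at center. -/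
theorem gateaux_aux
    {E F : Type*} [NormedAddCommGroup E] [NormedSpace ℂ E]
    [NormedAddCommGroup F] [NormedSpace ℂ F] [CompleteSpace F]
    (U : Set E) (hU : IsOpen U) (f : E → F)
    (hG : ∀ a ∈ U, ∀ x : E,
        DifferentiableOn ℂ (fun z : ℂ => f (a + z • x)) {z : ℂ | a + z • x ∈ U})
    {a : E} {r C : ℝ} (hr : 0 < r) (hball : ball a r ⊆ U)
    (hC : ∀ y ∈ ball a r, ‖f y‖ ≤ C) :
    DifferentiableAt ℂ f a := by
  have ha : a ∈ U := hball (mem_ball_self hr)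
  have hC0 : 0 ≤ C := (norm_nonneg _).trans (hC a (mem_ball_self hr))
  -- differentiability along lines
  have gdiff : ∀ b ∈ U, ∀ (h : E) (z : ℂ), b + z • h ∈ U →
      DifferentiableAt ℂ (fun z : ℂ => f (b + z • h)) z := by
    intro b hb h z hz
    have hopen : IsOpen {z : ℂ | b + z • h ∈ U} :=
      hU.preimage (continuous_const.add (continuous_id.smul continuous_const))
    exact (hG b hb h).differentiableAt (hopen.mem_nhds hz)
  set T : E → E → F := fun b h => deriv (fun z : ℂ => f (b + z • h)) 0 with hT
  have hasT : ∀ b ∈ U, ∀ h : E, HasDerivAt (fun z : ℂ => f (b + z • h)) (T b h) 0 := by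
    intro b hb h
    have h0 : b + (0:ℂ) • h ∈ U := by simpa using hb
    simpa [hT] using (gdiff b hb h 0 h0).hasDerivAt
  have Tzero : ∀ b : E, T b 0 = 0 := by
    intro b; simp [hT, smul_zero]
  -- first Cauchy-Schwarz estimate: bound on T
  have est1 : ∀ (b h : E) (R : ℝ), 0 < R →
      (∀ z : ℂ, ‖z‖ < R → b + z • h ∈ ball a r) → ‖T b h‖ ≤ 2 * C / R := by
    intro b h R hR hmem
    have hb : b ∈ U := by
      have := hball (hmem 0 (by simpa using hR)); simpa using this
    set g : ℂ → F := fun z => f (b + z • h) with hg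
    have hgd : DifferentiableOn ℂ g (ball 0 R) := fun w hw =>
      (gdiff b hb h w (hball (hmem w (mem_ball_zero_iff.mp hw)))).differentiableWithinAt
    have hgB : ∀ w ∈ ball (0:ℂ) R, ‖g w - g 0‖ ≤ 2 * C := by
      intro w hw
      have h1 := hC _ (hmem w (mem_ball_zero_iff.mp hw))
      have h2 := hC _ (hmem 0 (by simpa using hR))
      calc ‖g w - g 0‖ ≤ ‖g w‖ + ‖g 0‖ := norm_sub_le _ _
        _ ≤ 2 * C := by simp only [hg]; linarith
    have := dslope_bound_aux hR hgd hgB (mem_ball_self hR)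
    rwa [dslope_same] at this
  -- second order Taylor estimate
  have est2 : ∀ (b h : E) (R : ℝ), 0 < R →
      (∀ z : ℂ, ‖z‖ < R → b + z • h ∈ ball a r) →
      ∀ z : ℂ, ‖z‖ < R → ‖f (b + z • h) - f b - z • T b h‖ ≤ 4 * C / R ^ 2 * ‖z‖ ^ 2 := by
    intro b h R hR hmem z hz
    have hzb : z ∈ ball (0:ℂ) R := mem_ball_zero_iff.mpr hz
    have hb : b ∈ U := by
      have := hball (hmem 0 (by simpa using hR)); simpa using this
    have hTb : ‖T b h‖ ≤ 2 * C / R := est1 b h R hR hmem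
    set g : ℂ → F := fun z => f (b + z • h) with hg
    have hg0 : g 0 = f b := by simp [hg]
    have hgd : ∀ w ∈ ball (0:ℂ) R, DifferentiableAt ℂ g w := fun w hw =>
      gdiff b hb h w (hball (hmem w (mem_ball_zero_iff.mp hw)))
    set ψ : ℂ → F := fun z => g z - f b - z • T b h with hψ
    have hψd : DifferentiableOn ℂ ψ (ball 0 R) := fun w hw =>
      (((hgd w hw).sub_const _).sub
        (differentiableAt_id.smul_const _)).differentiableWithinAt
    have hψ0 : ψ 0 = 0 := by simp [hψ, hg0]
    have hψB : ∀ w ∈ ball (0:ℂ) R, ‖ψ w - ψ 0‖ ≤ 4 * C := by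
      intro w hw
      rw [hψ0, sub_zero]
      have hwR : ‖w‖ < R := mem_ball_zero_iff.mp hw
      have h1 : ‖g w - f b‖ ≤ 2 * C := by
        have h1a : ‖g w‖ ≤ C := hC _ (hmem w hwR)
        have h1b : ‖f b‖ ≤ C := by simpa using hC _ (hmem 0 (by simpa using hR))
        calc ‖g w - f b‖ ≤ ‖g w‖ + ‖f b‖ := norm_sub_le _ _
          _ ≤ 2 * C := by linarith
      have h2 : ‖w • T b h‖ ≤ 2 * C := by
        rw [norm_smul]
        calc ‖w‖ * ‖T b h‖ ≤ R * (2 * C / R) := by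
              apply mul_le_mul hwR.le hTb (norm_nonneg _) hR.le
          _ = 2 * C := by field_simp
      calc ‖ψ w‖ = ‖(g w - f b) - w • T b h‖ := rfl
        _ ≤ ‖g w - f b‖ + ‖w • T b h‖ := norm_sub_le _ _
        _ ≤ 4 * C := by linarith
    have hψ'0 : HasDerivAt ψ 0 0 := by
      have h2 : HasDerivAt (fun z : ℂ => z • T b h) (T b h) 0 := by
        simpa using (hasDerivAt_id (0:ℂ)).smul_const (T b h)
      have := ((hasT b hb h).sub_const (f b)).sub h2
      rw [sub_self] at this
      exact this
    set φ : ℂ → F := dslope ψ 0 with hφ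
    have hφd : DifferentiableOn ℂ φ (ball 0 R) :=
      (Complex.differentiableOn_dslope (ball_mem_nhds _ hR)).mpr hψd
    have hφ0 : φ 0 = 0 := by rw [hφ, dslope_same, hψ'0.deriv]
    have hφB : ∀ w ∈ ball (0:ℂ) R, ‖φ w - φ 0‖ ≤ 4 * C / R := by
      intro w hw
      rw [hφ0, sub_zero]
      exact dslope_bound_aux hR hψd hψB hw
    have h3 : ‖dslope φ 0 z‖ ≤ 4 * C / R / R := dslope_bound_aux hR hφd hφB hzb
    have e1 : ψ z = z • φ z := by
      have := sub_smul_dslope ψ 0 z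
      rw [hψ0, sub_zero, sub_zero] at this
      exact this.symm
    have e2 : φ z = z • dslope φ 0 z := by
      have := sub_smul_dslope φ 0 z
      rw [hφ0, sub_zero, sub_zero] at this
      exact this.symm
    calc ‖f (b + z • h) - f b - z • T b h‖ = ‖ψ z‖ := rfl
      _ = ‖z‖ * (‖z‖ * ‖dslope φ 0 z‖) := by rw [e1, e2, norm_smul, norm_smul]
      _ ≤ ‖z‖ * (‖z‖ * (4 * C / R / R)) := by
          apply mul_le_mul_of_nonneg_left
            (mul_le_mul_of_nonneg_left h3 (norm_nonneg _)) (norm_nonneg _)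
      _ = 4 * C / R ^ 2 * ‖z‖ ^ 2 := by ring
  -- membership helper
  have hmem_aux : ∀ (b h : E) (z : ℂ) (ρ : ℝ), dist b a ≤ ρ → ‖z‖ * ‖h‖ < r - ρ →
      b + z • h ∈ ball a r := by
    intro b h z ρ h1 h2
    rw [mem_ball]
    calc dist (b + z • h) a ≤ dist (b + z • h) b + dist b a := dist_triangle _ _ _
      _ < (r - ρ) + ρ := by
          apply add_lt_add_of_lt_of_le _ h1
          rw [dist_eq_norm, add_sub_cancel_left, norm_smul]
          exact h2
      _ = r := by ring
  -- T bound
  have Tbound : ∀ b ∈ ball a (r/2), ∀ h : E, ‖T b h‖ ≤ 4 * C / r * ‖h‖ := by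
    intro b hb h
    rcases eq_or_ne h 0 with rfl | hh
    · rw [Tzero]; simp
    have hh' : 0 < ‖h‖ := norm_pos_iff.mpr hh
    have hR : 0 < r / 2 / ‖h‖ := by positivity
    have key := est1 b h (r / 2 / ‖h‖) hR (fun z hz => hmem_aux b h z (r/2)
      (mem_ball.mp hb).le (by rw [show r - r/2 = r/2 by ring]; exact (lt_div_iff₀ hh').mp hz))
    calc ‖T b h‖ ≤ 2 * C / (r / 2 / ‖h‖) := key
      _ = 4 * C / r * ‖h‖ := by field_simp; ring
  -- main Taylor estimate
  have main_est : ∀ b ∈ ball a (r/2), ∀ h : E, ‖h‖ < r / 2 →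
      ‖f (b + h) - f b - T b h‖ ≤ 16 * C / r ^ 2 * ‖h‖ ^ 2 := by
    intro b hb h hhr
    rcases eq_or_ne h 0 with rfl | hh
    · rw [Tzero]; simp
    have hh' : 0 < ‖h‖ := norm_pos_iff.mpr hh
    have hR : 0 < r / 2 / ‖h‖ := by positivity
    have h1R : ‖(1:ℂ)‖ < r / 2 / ‖h‖ := by
      rw [norm_one]; rw [lt_div_iff₀ hh']; linarith
    have key := est2 b h (r / 2 / ‖h‖) hR (fun z hz => hmem_aux b h z (r/2)
      (mem_ball.mp hb).le (by rw [show r - r/2 = r/2 by ring]; exact (lt_div_iff₀ hh').mp hz))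
      1 h1R
    simp only [one_smul, norm_one] at key
    calc ‖f (b + h) - f b - T b h‖ ≤ 4 * C / (r / 2 / ‖h‖) ^ 2 * 1 ^ 2 := key
      _ = 16 * C / r ^ 2 * ‖h‖ ^ 2 := by field_simp; ring
  -- Lipschitz-type bound on f
  have fLip : ∀ b ∈ ball a (r/2), ∀ h : E, ‖h‖ < r / 2 →
      ‖f (b + h) - f b‖ ≤ 12 * C / r * ‖h‖ := by
    intro b hb h hhr
    have h1 := main_est b hb h hhr
    have h2 := Tbound b hb h
    have h3 : 16 * C / r ^ 2 * ‖h‖ ^ 2 ≤ 8 * C / r * ‖h‖ := by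
      rw [pow_two, pow_two]
      have : 16 * C / (r * r) * (‖h‖ * ‖h‖) = (16 * C / r * ‖h‖) * (‖h‖ / r) := by
        field_simp
      rw [this]
      have h4 : ‖h‖ / r ≤ 1 / 2 := by rw [div_le_div_iff₀ hr (by norm_num)]; linarith
      calc (16 * C / r * ‖h‖) * (‖h‖ / r) ≤ (16 * C / r * ‖h‖) * (1/2) := by
            apply mul_le_mul_of_nonneg_left h4 (by positivity)
        _ = 8 * C / r * ‖h‖ := by ring
    calc ‖f (b + h) - f b‖ = ‖(f (b + h) - f b - T b h) + T b h‖ := by abel_nf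
      _ ≤ ‖f (b + h) - f b - T b h‖ + ‖T b h‖ := norm_add_le _ _
      _ ≤ 8 * C / r * ‖h‖ + 4 * C / r * ‖h‖ := add_le_add (h1.trans h3) h2
      _ = 12 * C / r * ‖h‖ := by ring
  -- difference of Gâteaux derivatives at two nearby base points
  have estd : ∀ (b₁ b₂ h : E) (R B : ℝ), 0 < R →
      (∀ z : ℂ, ‖z‖ < R → b₁ + z • h ∈ U) →
      (∀ z : ℂ, ‖z‖ < R → b₂ + z • h ∈ U) →
      (∀ z : ℂ, ‖z‖ < R → ‖f (b₁ + z • h) - f (b₂ + z • h)‖ ≤ B) →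
      ‖T b₁ h - T b₂ h‖ ≤ 2 * B / R := by
    intro b₁ b₂ h R B hR h1U h2U hBd
    have hb₁ : b₁ ∈ U := by have := h1U 0 (by simpa using hR); simpa using this
    have hb₂ : b₂ ∈ U := by have := h2U 0 (by simpa using hR); simpa using this
    set d : ℂ → F := fun z => f (b₁ + z • h) - f (b₂ + z • h) with hd
    have hdd : DifferentiableOn ℂ d (ball 0 R) := fun w hw =>
      ((gdiff b₁ hb₁ h w (h1U w (mem_ball_zero_iff.mp hw))).sub
        (gdiff b₂ hb₂ h w (h2U w (mem_ball_zero_iff.mp hw)))).differentiableWithinAt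
    have hdB : ∀ w ∈ ball (0:ℂ) R, ‖d w - d 0‖ ≤ 2 * B := by
      intro w hw
      have h1 := hBd w (mem_ball_zero_iff.mp hw)
      have h2 := hBd 0 (by simpa using hR)
      calc ‖d w - d 0‖ ≤ ‖d w‖ + ‖d 0‖ := norm_sub_le _ _
        _ ≤ 2 * B := by rw [hd]; simp only; linarith
    have hd0 : HasDerivAt d (T b₁ h - T b₂ h) 0 := (hasT b₁ hb₁ h).sub (hasT b₂ hb₂ h)
    have := dslope_bound_aux hR hdd hdB (mem_ball_self hR)
    rwa [dslope_same, hd0.deriv] at this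
  -- homogeneity of T
  have Thom : ∀ b ∈ U, ∀ (c : ℂ) (h : E), T b (c • h) = c • T b h := by
    intro b hb c h
    have hc : HasDerivAt (fun z : ℂ => c * z) c 0 := by
      simpa using (hasDerivAt_id (0:ℂ)).const_mul c
    have hg : HasDerivAt (fun w : ℂ => f (b + w • h)) (T b h) (c * 0) := by
      rw [mul_zero]; exact hasT b hb h
    have hcomp := HasDerivAt.scomp (0:ℂ) hg hc
    have heq : (fun z : ℂ => f (b + z • c • h)) =
        (fun w : ℂ => f (b + w • h)) ∘ fun z : ℂ => c * z := by
      funext z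
      simp only [Function.comp_apply, smul_smul, mul_comm z c]
    have : HasDerivAt (fun z : ℂ => f (b + z • c • h)) (c • T b h) 0 := by
      rw [heq]
      exact hcomp
    simpa [hT] using this.deriv
  -- additivity of T a
  have Tadd : ∀ h k : E, T a (h + k) = T a h + T a k := by
    intro h k
    set N : ℝ := ‖h‖ + ‖k‖ + 1 with hN
    have hN0 : 0 < N := by positivity
    have hδ0 : 0 < r / 4 / N := by positivity
    set K : ℝ := 16 * C / r ^ 2 * (‖h + k‖ ^ 2 + ‖h‖ ^ 2 + ‖k‖ ^ 2)
        + 96 * C / r ^ 2 * ‖h‖ * (‖k‖ + 1) with hK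
    have key : ∀ ε : ℝ, 0 < ε → ε < r / 4 / N →
        ‖T a (h + k) - T a h - T a k‖ ≤ ε * K := by
      intro ε hε hεδ
      set ec : ℂ := (ε : ℂ) with hec
      have hecn : ‖ec‖ = ε := by
        rw [hec, Complex.norm_real, Real.norm_of_nonneg hε.le]
      have hns : ∀ v : E, ‖ec • v‖ = ε * ‖v‖ := fun v => by rw [norm_smul, hecn]
      have hεN : ε * N < r / 4 := by
        rw [div_div] at hεδ
        calc ε * N < r / (4 * N) * N := by
              apply mul_lt_mul_of_pos_right hεδ hN0
          _ = r / 4 := by field_simp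
      have hmono : ∀ x : ℝ, x ≤ N → ε * x < r / 4 := by
        intro x hx
        calc ε * x ≤ ε * N := mul_le_mul_of_nonneg_left hx hε.le
          _ < r / 4 := hεN
      have hεh : ε * ‖h‖ < r / 4 := hmono _ (by rw [hN]; linarith [norm_nonneg k])
      have hεk : ε * ‖k‖ < r / 4 := hmono _ (by rw [hN]; linarith [norm_nonneg h])
      have hεhk : ε * ‖h + k‖ < r / 2 := by
        have h1 : ε * ‖h + k‖ < r / 4 := hmono _ (by rw [hN]; linarith [norm_add_le h k])
        linarith
      have hr2 : 0 < r / 2 := by linarith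
      have hmem_h : a + ec • h ∈ ball a (r/2) := by
        rw [mem_ball, dist_eq_norm, add_sub_cancel_left, hns]; linarith
      -- A1, A2, A3
      have A1 := main_est a (mem_ball_self hr2) (ec • (h + k)) (by rw [hns]; linarith)
      have A2 := main_est a (mem_ball_self hr2) (ec • h) (by rw [hns]; linarith)
      have A3 := main_est (a + ec • h) hmem_h (ec • k) (by rw [hns]; linarith)
      -- A4 via estd
      set R : ℝ := r / 4 / (ε * (‖k‖ + 1)) with hR
      have hRpos : 0 < R := by positivity
      have hzsmall : ∀ z : ℂ, ‖z‖ < R → ‖z‖ * (ε * ‖k‖) < r / 4 := by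
        intro z hz
        have h1 : ‖z‖ * (ε * (‖k‖ + 1)) < r / 4 := by
          rw [hR] at hz
          calc ‖z‖ * (ε * (‖k‖ + 1)) < r / 4 / (ε * (‖k‖ + 1)) * (ε * (‖k‖ + 1)) := by
                apply mul_lt_mul_of_pos_right hz (by positivity)
            _ = r / 4 := by field_simp
        have h2 : ‖z‖ * (ε * ‖k‖) ≤ ‖z‖ * (ε * (‖k‖ + 1)) := by
          apply mul_le_mul_of_nonneg_left _ (norm_nonneg z)
          apply mul_le_mul_of_nonneg_left (by linarith) hε.le
        linarith
      have hU1 : ∀ z : ℂ, ‖z‖ < R → (a + ec • h) + z • (ec • k) ∈ U := by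
        intro z hz
        apply hball
        apply hmem_aux (a + ec • h) (ec • k) z (r/4)
        · rw [dist_eq_norm, add_sub_cancel_left, hns]; linarith
        · rw [hns]
          calc ‖z‖ * (ε * ‖k‖) < r / 4 := hzsmall z hz
            _ ≤ r - r / 4 := by linarith
      have hU2 : ∀ z : ℂ, ‖z‖ < R → a + z • (ec • k) ∈ U := by
        intro z hz
        apply hball
        apply hmem_aux a (ec • k) z (r/4)
        · simp [hr.le]; positivity
        · rw [hns]
          calc ‖z‖ * (ε * ‖k‖) < r / 4 := hzsmall z hz
            _ ≤ r - r / 4 := by linarith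
      have hBd : ∀ z : ℂ, ‖z‖ < R →
          ‖f ((a + ec • h) + z • (ec • k)) - f (a + z • (ec • k))‖ ≤ 12 * C / r * (ε * ‖h‖) := by
        intro z hz
        have hbase : a + z • (ec • k) ∈ ball a (r/2) := by
          rw [mem_ball, dist_eq_norm, add_sub_cancel_left, norm_smul, hns]
          calc ‖z‖ * (ε * ‖k‖) < r / 4 := hzsmall z hz
            _ < r / 2 := by linarith
        have := fLip (a + z • (ec • k)) hbase (ec • h) (by rw [hns]; linarith)
        rw [hns] at this
        have harg : a + z • (ec • k) + ec • h = (a + ec • h) + z • (ec • k) := by abel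
        rwa [harg] at this
      have A4 := estd (a + ec • h) a (ec • k) R (12 * C / r * (ε * ‖h‖)) hRpos hU1 hU2 hBd
      have hA4bound : 2 * (12 * C / r * (ε * ‖h‖)) / R = 96 * C / r ^ 2 * (ε ^ 2 * (‖h‖ * (‖k‖ + 1))) := by
        rw [hR]; field_simp; ring
      rw [hA4bound] at A4
      -- algebraic identity
      have hsplit : a + ec • (h + k) = a + ec • h + ec • k := by
        rw [smul_add, ← add_assoc]
      rw [hsplit] at A1
      have hkey : ec • (T a (h + k) - T a h - T a k) =
          (f (a + ec • h) - f a - T a (ec • h))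
          + (f (a + ec • h + ec • k) - f (a + ec • h) - T (a + ec • h) (ec • k))
          + (T (a + ec • h) (ec • k) - T a (ec • k))
          - (f (a + ec • h + ec • k) - f a - T a (ec • (h + k))) := by
        rw [Thom a ha ec (h + k), Thom a ha ec h, Thom a ha ec k]
        module
      have hnorm : ε * ‖T a (h + k) - T a h - T a k‖ ≤ ε * (ε * K) := by
        calc ε * ‖T a (h + k) - T a h - T a k‖
            = ‖ec • (T a (h + k) - T a h - T a k)‖ := by rw [norm_smul, hecn]
          _ ≤ ‖f (a + ec • h) - f a - T a (ec • h)‖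
              + ‖f (a + ec • h + ec • k) - f (a + ec • h) - T (a + ec • h) (ec • k)‖
              + ‖T (a + ec • h) (ec • k) - T a (ec • k)‖
              + ‖f (a + ec • h + ec • k) - f a - T a (ec • (h + k))‖ := by
                rw [hkey]
                exact (norm_sub_le _ _).trans (add_le_add norm_add₃_le le_rfl)
          _ ≤ 16 * C / r ^ 2 * ‖ec • h‖ ^ 2
              + 16 * C / r ^ 2 * ‖ec • k‖ ^ 2
              + 96 * C / r ^ 2 * (ε ^ 2 * (‖h‖ * (‖k‖ + 1)))
              + 16 * C / r ^ 2 * ‖ec • (h + k)‖ ^ 2 := by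
                refine add_le_add (add_le_add (add_le_add A2 A3) A4) A1
          _ = ε * (ε * K) := by rw [hns, hns, hns, hK]; ring
      exact le_of_mul_le_mul_left hnorm hε
    have hΔ : ‖T a (h + k) - T a h - T a k‖ ≤ 0 := by
      have htend : Tendsto (fun ε : ℝ => ε * K) (nhdsWithin 0 (Set.Ioi 0)) (nhds 0) := by
        have : Tendsto (fun ε : ℝ => ε * K) (nhds 0) (nhds 0) := by
          have hc : Continuous (fun ε : ℝ => ε * K) := continuous_id.mul continuous_const
          have := hc.tendsto 0
          rwa [zero_mul] at this
        exact this.mono_left nhdsWithin_le_nhds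
      refine ge_of_tendsto htend ?_
      filter_upwards [Ioo_mem_nhdsGT_of_mem ⟨le_rfl, hδ0⟩] with ε hε
      exact key ε hε.1 hε.2
    have := norm_le_zero_iff.mp hΔ
    rw [sub_sub, sub_eq_zero] at this
    exact this
  -- build the continuous linear map
  set Tlin : E →L[ℂ] F := LinearMap.mkContinuous
    { toFun := T a
      map_add' := Tadd
      map_smul' := fun c x => Thom a ha c x } (4 * C / r)
    (fun x => Tbound a (mem_ball_self (by linarith)) x) with hTlin
  have hTlin_apply : ∀ x : E, Tlin x = T a x := fun x => rfl
  -- conclude Fréchet differentiability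
  have hFD : HasFDerivAt f Tlin a := by
    rw [hasFDerivAt_iff_isLittleO_nhds_zero]
    have hbig : (fun h : E => f (a + h) - f a - Tlin h) =O[nhds 0] fun h : E => ‖h‖ * ‖h‖ := by
      apply Asymptotics.IsBigO.of_bound (16 * C / r ^ 2)
      filter_upwards [Metric.ball_mem_nhds (0:E) (by linarith : (0:ℝ) < r / 2)] with x hx
      have hx' : ‖x‖ < r / 2 := mem_ball_zero_iff.mp hx
      have := main_est a (mem_ball_self (by linarith)) x hx'
      rw [hTlin_apply]
      calc ‖f (a + x) - f a - T a x‖ ≤ 16 * C / r ^ 2 * ‖x‖ ^ 2 := this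
        _ = 16 * C / r ^ 2 * ‖‖x‖ * ‖x‖‖ := by
            rw [Real.norm_of_nonneg (by positivity)]; ring
    have hsmall : (fun x : E => ‖x‖ * ‖x‖) =o[nhds 0] (fun x : E => x) := by
      rw [Asymptotics.isLittleO_iff]
      intro c hc
      filter_upwards [Metric.ball_mem_nhds (0:E) hc] with x hx
      rw [Real.norm_of_nonneg (by positivity)]
      exact mul_le_mul_of_nonneg_right (mem_ball_zero_iff.mp hx).le (norm_nonneg x)
    exact hbig.trans_isLittleO hsmall
  exact hFD.differentiableAt



/-- A map `f : U → F` between complex Banach spaces (`U ⊆ E` open) is Fréchet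
holomorphic on `U` if and only if it is Gâteaux holomorphic (holomorphic on
complex lines) and locally bounded on `U`. -/
theorem holomorphic_iff_gateaux_and_locallyBounded
    {E F : Type*} [NormedAddCommGroup E] [NormedSpace ℂ E] [CompleteSpace E]
    [NormedAddCommGroup F] [NormedSpace ℂ F] [CompleteSpace F]
    (U : Set E) (hU : IsOpen U) (f : E → F) :
    DifferentiableOn ℂ f U ↔
      ((∀ a ∈ U, ∀ x : E,
          DifferentiableOn ℂ (fun z : ℂ => f (a + z • x)) {z : ℂ | a + z • x ∈ U}) ∧
        (∀ a ∈ U, ∃ r > (0:ℝ), ∃ C : ℝ, ∀ y ∈ Metric.ball a r ∩ U, ‖f y‖ ≤ C)) := by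
  constructor
  · intro hf
    constructor
    · intro a ha x
      have hline : Differentiable ℂ (fun z : ℂ => a + z • x) :=
        (differentiable_const a).add (differentiable_id.smul_const x)
      exact hf.comp hline.differentiableOn (fun z hz => hz)
    · intro a ha
      have hc : ContinuousAt f a := (hf.differentiableAt (hU.mem_nhds ha)).continuousAt
      have hev : f ⁻¹' (ball (f a) 1) ∈ nhds a := hc (ball_mem_nhds (f a) one_pos)
      obtain ⟨r, hr, hsub⟩ := Metric.mem_nhds_iff.mp hev
      refine ⟨r, hr, ‖f a‖ + 1, ?_⟩
      rintro y ⟨hy, -⟩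
      have hfy : f y ∈ ball (f a) 1 := hsub hy
      rw [mem_ball, dist_eq_norm] at hfy
      calc ‖f y‖ = ‖f a + (f y - f a)‖ := by rw [add_sub_cancel]
        _ ≤ ‖f a‖ + ‖f y - f a‖ := norm_add_le _ _
        _ ≤ ‖f a‖ + 1 := by linarith
  · rintro ⟨hG, hB⟩
    intro a ha
    obtain ⟨r0, hr0, C, hC⟩ := hB a ha
    obtain ⟨r1, hr1, hsub⟩ := Metric.isOpen_iff.mp hU a ha
    have hrmin : 0 < min r0 r1 := lt_min hr0 hr1
    have hball : ball a (min r0 r1) ⊆ U :=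
      (ball_subset_ball (min_le_right _ _)).trans hsub
    have hC' : ∀ y ∈ ball a (min r0 r1), ‖f y‖ ≤ C := fun y hy =>
      hC y ⟨ball_subset_ball (min_le_left _ _) hy, hball hy⟩
    exact (gateaux_aux U hU f hG hrmin hball hC').differentiableWithinAt
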